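/- arXiv:0907.2050 — 2 statements merged into one kernel-verified Lean document; each statement's English description precedes it below -/
import Mathlib

section
/- Let w_h > 0, let w : [-1,0] → ℝ be a function with w(x) ≥ e^x · w_h for all x ∈ [-1,0], and let w_j ∈ [e^{-1} w_h, w_h] with y = ln(w_j/w_h). Assume w is integrable on [-1,0]. Then (∫_{-1}^{y} w(x) dx + ∫_{y}^{0} w(x) dx) / (w_j + ∫_{y}^{0} w(x) dx) ≥ 1 - 1/e. -/
theorem stmt3 (wh wj : ℝ) (hwh : 0 < wh)
    (w : ℝ → ℝ)
    (hw : ∀ x ∈ Set.Icc (-1:ℝ) 0, Real.exp x * wh ≤ w x)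
    (hint : IntervalIntegrable w MeasureTheory.volume (-1) 0)
    (h1 : Real.exp (-1) * wh ≤ wj) (h2 : wj ≤ wh) :
    ((∫ x in (-1:ℝ)..(Real.log (wj / wh)), w x) +
        ∫ x in (Real.log (wj / wh))..(0:ℝ), w x) /
      (wj + ∫ x in (Real.log (wj / wh))..(0:ℝ), w x)
      ≥ 1 - 1 / Real.exp 1 := by
  have hwj : 0 < wj := lt_of_lt_of_le (by positivity) h1
  set y := Real.log (wj / wh) with hy
  have hratio : 0 < wj / wh := by positivity
  have hey : Real.exp y = wj / wh := Real.exp_log hratio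
  have hy0 : y ≤ 0 := Real.log_nonpos (le_of_lt hratio) (by
    rw [div_le_one hwh]; exact h2)
  have hy1 : (-1:ℝ) ≤ y := by
    have : Real.exp (-1) ≤ Real.exp y := by
      rw [hey, le_div_iff₀ hwh]; linarith [h1]
    exact (Real.exp_le_exp.mp this)
  have hintA : IntervalIntegrable w MeasureTheory.volume (-1) y :=
    hint.mono_set (Set.uIcc_subset_uIcc (by simp) (by
      rw [Set.mem_uIcc]; left; exact ⟨hy1, hy0⟩))
  have hintB : IntervalIntegrable w MeasureTheory.volume y 0 :=
    hint.mono_set (Set.uIcc_subset_uIcc (by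
      rw [Set.mem_uIcc]; left; exact ⟨hy1, hy0⟩) (by simp))
  have hinte : ∀ a b : ℝ, IntervalIntegrable (fun x => Real.exp x * wh) MeasureTheory.volume a b := by
    intro a b
    exact (Real.continuous_exp.mul continuous_const).intervalIntegrable a b
  have hIexp : ∀ a b : ℝ, (∫ x in a..b, Real.exp x * wh) = (Real.exp b - Real.exp a) * wh := by
    intro a b
    rw [intervalIntegral.integral_mul_const, integral_exp]
  have hA : (Real.exp y - Real.exp (-1)) * wh ≤ ∫ x in (-1:ℝ)..y, w x := by
    rw [← hIexp]
    apply intervalIntegral.integral_mono_on hy1 (hinte _ _) hintA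
    intro x hx
    exact hw x ⟨hx.1, le_trans hx.2 hy0⟩
  have hB : (Real.exp 0 - Real.exp y) * wh ≤ ∫ x in y..(0:ℝ), w x := by
    rw [← hIexp]
    apply intervalIntegral.integral_mono_on hy0 (hinte _ _) hintB
    intro x hx
    exact hw x ⟨le_trans hy1 hx.1, hx.2⟩
  set A := ∫ x in (-1:ℝ)..y, w x
  set B := ∫ x in y..(0:ℝ), w x
  have heyw : Real.exp y * wh = wj := by
    rw [hey]; field_simp
  have he1 : Real.exp (-1) = 1 / Real.exp 1 := by
    rw [Real.exp_neg]; ring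
  set t := 1 / Real.exp 1 with ht
  have htpos : 0 < t := by positivity
  have hA' : wj - wh * t ≤ A := by
    have := hA
    rw [he1] at this
    nlinarith [this, heyw]
  have hB' : wh - wj ≤ B := by
    have := hB
    rw [Real.exp_zero] at this
    nlinarith [this, heyw]
  have hden : 0 < wj + B := by nlinarith
  rw [ge_iff_le, le_div_iff₀ hden]
  nlinarith [hA', hB', mul_le_mul_of_nonneg_left hB' htpos.le]
end

section
/- Let μ be the uniform probability measure on [-1, 0], w_h > 0, and g : ℝ → ℝ measurable with g(x) ≥ e^x w_h for a.e. x ∈ [-1,0], and g integrable. Then for every y ∈ [-1, 0], (∫ g dμ) / (e^y w_h + ∫_{[y,0]} g dμ) ≥ 1 - 1/e. -/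
open MeasureTheory

lemma exp_setIntegral (wh a b : ℝ) (hab : a ≤ b) :
    ∫ x in Set.Icc a b, Real.exp x * wh = (Real.exp b - Real.exp a) * wh := by
  rw [integral_Icc_eq_integral_Ioc, ← intervalIntegral.integral_of_le hab,
    intervalIntegral.integral_mul_const, integral_exp]

theorem stmt8 (wh : ℝ) (hwh : 0 < wh) (g : ℝ → ℝ) (hg : Measurable g)
    (hge : ∀ᵐ x ∂(volume.restrict (Set.Icc (-1:ℝ) 0)), Real.exp x * wh ≤ g x)
    (hint : Integrable g (volume.restrict (Set.Icc (-1:ℝ) 0)))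
    (y : ℝ) (hy1 : -1 ≤ y) (hy2 : y ≤ 0) :
    (∫ x, g x ∂(volume.restrict (Set.Icc (-1:ℝ) 0))) /
        (Real.exp y * wh +
          ∫ x in Set.Icc y 0, g x ∂(volume.restrict (Set.Icc (-1:ℝ) 0)))
      ≥ 1 - 1 / Real.exp 1 := by
  have hsub1 : Set.Icc y 0 ⊆ Set.Icc (-1:ℝ) 0 := Set.Icc_subset_Icc hy1 le_rfl
  have hsub2 : Set.Icc (-1:ℝ) y ⊆ Set.Icc (-1:ℝ) 0 := Set.Icc_subset_Icc le_rfl hy2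
  -- rewrite inner integral as plain set integral
  have hres : (volume.restrict (Set.Icc (-1:ℝ) 0)).restrict (Set.Icc y 0)
      = volume.restrict (Set.Icc y 0) := by
    rw [Measure.restrict_restrict measurableSet_Icc, Set.inter_eq_left.mpr hsub1]
  have hBeq : (∫ x in Set.Icc y 0, g x ∂(volume.restrict (Set.Icc (-1:ℝ) 0)))
      = ∫ x in Set.Icc y 0, g x := by rw [hres]
  -- integrability on subsets
  have hint1 : IntegrableOn g (Set.Icc y 0) := by
    have := hint.restrict (s := Set.Icc y 0)
    rwa [hres] at this
  have hint2 : IntegrableOn g (Set.Icc (-1:ℝ) y) := by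
    have := hint.restrict (s := Set.Icc (-1:ℝ) y)
    rwa [Measure.restrict_restrict measurableSet_Icc, Set.inter_eq_left.mpr hsub2] at this
  -- a.e. bounds on subsets
  have hae1 : ∀ᵐ x ∂(volume.restrict (Set.Icc y 0)), Real.exp x * wh ≤ g x :=
    ae_restrict_of_ae_restrict_of_subset hsub1 hge
  have hae2 : ∀ᵐ x ∂(volume.restrict (Set.Icc (-1:ℝ) y)), Real.exp x * wh ≤ g x :=
    ae_restrict_of_ae_restrict_of_subset hsub2 hge
  have hexpint : ∀ a b : ℝ, IntegrableOn (fun x => Real.exp x * wh) (Set.Icc a b) :=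
    fun a b => (Real.continuous_exp.mul continuous_const).continuousOn.integrableOn_Icc
  -- lower bounds
  have hB : (Real.exp 0 - Real.exp y) * wh ≤ ∫ x in Set.Icc y 0, g x := by
    rw [← exp_setIntegral wh y 0 hy2]
    exact setIntegral_mono_ae_restrict (hexpint y 0) hint1 hae1
  have hA : (Real.exp y - Real.exp (-1)) * wh ≤ ∫ x in Set.Icc (-1:ℝ) y, g x := by
    rw [← exp_setIntegral wh (-1) y hy1]
    exact setIntegral_mono_ae_restrict (hexpint (-1) y) hint2 hae2
  -- split the numerator
  have hsplit : (∫ x, g x ∂(volume.restrict (Set.Icc (-1:ℝ) 0)))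
      = (∫ x in Set.Icc (-1:ℝ) y, g x) + ∫ x in Set.Icc y 0, g x := by
    have hu : Set.Icc (-1:ℝ) 0 = Set.Icc (-1:ℝ) y ∪ Set.Ioc y 0 :=
      (Set.Icc_union_Ioc_eq_Icc hy1 hy2).symm
    have : (∫ x, g x ∂(volume.restrict (Set.Icc (-1:ℝ) 0)))
        = ∫ x in Set.Icc (-1:ℝ) 0, g x := rfl
    rw [this, hu, setIntegral_union (Set.disjoint_left.mpr fun x hx hx2 => absurd hx.2 (not_le.mpr hx2.1))
      measurableSet_Ioc hint2
      (hint1.mono_set Set.Ioc_subset_Icc_self), ← integral_Icc_eq_integral_Ioc]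
  set A := ∫ x in Set.Icc (-1:ℝ) y, g x
  set B := ∫ x in Set.Icc y 0, g x
  have hBpos : 0 ≤ B := le_trans (by
    have : Real.exp y ≤ Real.exp 0 := Real.exp_le_exp.mpr hy2
    nlinarith) hB
  have hDpos : 0 < Real.exp y * wh + B :=
    add_pos_of_pos_of_nonneg (mul_pos (Real.exp_pos y) hwh) hBpos
  rw [hsplit, hBeq, ge_iff_le, le_div_iff₀ hDpos]
  have hee : Real.exp (-1) = 1 / Real.exp 1 := by
    rw [Real.exp_neg]; field_simp
  rw [← hee]
  rw [Real.exp_zero] at hB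
  have hEB : Real.exp (-1) * ((1 - Real.exp y) * wh) ≤ Real.exp (-1) * B :=
    mul_le_mul_of_nonneg_left hB (Real.exp_pos (-1)).le
  nlinarith [hA, hEB]
end
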